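/- arXiv:1803.02812 — 2 statements merged into one kernel-verified Lean document; each statement's English description precedes it below -/
import Mathlib

section
/- Let G be a topological group that is a SIN-group (the conjugation-invariant neighborhoods of the identity form a neighborhood basis at the identity), N an open normal subgroup of G, F = G/N, φ : G → F the quotient homomorphism, and σ : F → G a section of φ with σ(1_F) = 1_G. Let X be a complex Hilbert space and π a group homomorphism from N into the group of unitary operators on X that is norm-continuous, i.e. the map n ↦ π(n) from N to the bounded operators on X is continuous for the operator-norm topology. Let π' be the induced representation of G on ℓ²(F, X), determined by (π'(g)ξ)(t) = π(σ(t)·g·σ(t·φ(g))⁻¹)(ξ(t·φ(g))). Then π' is norm-continuous: the map g ↦ π'(g) from G to the bounded operators on ℓ²(F, X) is continuous for the operator-norm topology. -/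
open scoped ENNReal

/-- A topological group is a SIN-group if the conjugation-invariant neighborhoods of the
identity form a neighborhood basis at the identity. -/
def IsSINGroup (G : Type*) [Group G] [TopologicalSpace G] : Prop :=
  ∀ U ∈ nhds (1 : G), ∃ V ∈ nhds (1 : G), V ⊆ U ∧ ∀ a : G, ∀ v ∈ V, a * v * a⁻¹ ∈ V

/-
For `g` close to `1` in the SIN-group `G`, every conjugate `σ t * g * (σ t)⁻¹` lies in a
prescribed neighbourhood of `1` inside the open subgroup `N`; in particular `g ∈ N`, so
`φ g = 1` and `π' g` acts on each coordinate `t` by the operator `π (σ t * g * (σ t)⁻¹)`,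
which is uniformly close to the identity by norm-continuity of `π` at `1`. A pointwise
bound `‖(π' g ξ - ξ) t‖ ≤ ε ‖ξ t‖` gives `‖π' g - 1‖ ≤ ε`, and continuity at `1` of a
homomorphism into a normed algebra gives continuity everywhere.
-/

open Filter Topology Metric

theorem IsSINGroup.eventually_forall_conj_mem {G : Type*} [Group G] [TopologicalSpace G]
    (hG : IsSINGroup G) {U : Set G} (hU : U ∈ 𝓝 1) :
    ∀ᶠ g in 𝓝 1, ∀ a : G, a * g * a⁻¹ ∈ U := by
  obtain ⟨V, hV, hVU, hVconj⟩ := hG U hU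
  filter_upwards [hV] with g hg a using hVU (hVconj a g hg)

theorem lp.norm_le_mul_norm_of_forall_le {ι : Type*} {E : ι → Type*}
    [∀ i, NormedAddCommGroup (E i)] {p : ℝ≥0∞} [Fact (1 ≤ p)] (hp : 0 < p.toReal)
    {C : ℝ} (hC : 0 ≤ C) {f g : lp E p} (h : ∀ i, ‖f i‖ ≤ C * ‖g i‖) :
    ‖f‖ ≤ C * ‖g‖ := by
  refine lp.norm_le_of_tsum_le hp (by positivity) ?_
  calc ∑' i, ‖f i‖ ^ p.toReal
      ≤ ∑' i, C ^ p.toReal * ‖g i‖ ^ p.toReal := by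
        refine ((lp.memℓp f).summable hp).tsum_le_tsum (fun i => ?_)
          (((lp.memℓp g).summable hp).mul_left _)
        rw [← Real.mul_rpow hC (norm_nonneg _)]
        exact Real.rpow_le_rpow (norm_nonneg _) (h i) hp.le
    _ = (C * ‖g‖) ^ p.toReal := by
        rw [tsum_mul_left, ← lp.norm_rpow_eq_tsum hp g, Real.mul_rpow hC (norm_nonneg _)]

namespace LinearIsometryEquiv

variable (𝕜 E : Type*) [NontriviallyNormedField 𝕜] [SeminormedAddCommGroup E]
  [NormedSpace 𝕜 E]

@[simps]
def toContinuousLinearMapHom : (E ≃ₗᵢ[𝕜] E) →* (E →L[𝕜] E) where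
  toFun e := e.toLinearIsometry.toContinuousLinearMap
  map_one' := rfl
  map_mul' _ _ := rfl

end LinearIsometryEquiv

open LinearIsometryEquiv (toContinuousLinearMapHom)

theorem norm_induced_sub_one_le {G : Type*} [Group G] {N : Subgroup G} [N.Normal]
    {σ : G ⧸ N → G} {𝕜 X : Type*} [NontriviallyNormedField 𝕜] [NormedAddCommGroup X]
    [NormedSpace 𝕜 X] {p : ℝ≥0∞} [Fact (1 ≤ p)] (hp : 0 < p.toReal)
    {π : N →* (X ≃ₗᵢ[𝕜] X)} {g : G} {π'g : lp (fun _ : G ⧸ N => X) p ≃ₗᵢ[𝕜] lp (fun _ => X) p}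
    (hπ'g : ∀ (ξ : lp (fun _ : G ⧸ N => X) p) (t : G ⧸ N) (n : N),
      (n : G) = σ t * g * (σ (t * QuotientGroup.mk' N g))⁻¹ →
        (π'g ξ : ∀ _ : G ⧸ N, X) t = π n (ξ (t * QuotientGroup.mk' N g)))
    (hg : g ∈ N) {C : ℝ} (hC : 0 ≤ C)
    (hconj : ∀ t, ∃ n : N, (n : G) = σ t * g * (σ t)⁻¹ ∧
      ‖toContinuousLinearMapHom 𝕜 X (π n) - 1‖ ≤ C) :
    ‖toContinuousLinearMapHom 𝕜 _ π'g - 1‖ ≤ C := by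
  refine ContinuousLinearMap.opNorm_le_bound _ hC fun ξ => ?_
  refine lp.norm_le_mul_norm_of_forall_le hp hC fun t => ?_
  obtain ⟨n, hn, hnC⟩ := hconj t
  have hgt : t * QuotientGroup.mk' N g = t := by
    rw [show QuotientGroup.mk' N g = 1 from (QuotientGroup.eq_one_iff g).2 hg, mul_one]
  have hcoord := hπ'g ξ t n (by rw [hgt, hn])
  rw [hgt] at hcoord
  calc ‖(π'g ξ - ξ : lp _ p) t‖ = ‖(toContinuousLinearMapHom 𝕜 X (π n) - 1) (ξ t)‖ := by
        simp [hcoord]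
    _ ≤ C * ‖ξ t‖ := ((toContinuousLinearMapHom 𝕜 X (π n) - 1).le_opNorm _).trans
        (mul_le_mul_of_nonneg_right hnC (norm_nonneg _))

theorem induced_representation_norm_continuous_general
    (G : Type*) [Group G] [TopologicalSpace G] [IsTopologicalGroup G]
    (hSIN : IsSINGroup G)
    (N : Subgroup G) [N.Normal] (hNopen : IsOpen (N : Set G))
    (σ : G ⧸ N → G)
    (X : Type*) [NormedAddCommGroup X] [InnerProductSpace ℂ X]
    (π : N →* (X ≃ₗᵢ[ℂ] X))
    (hπcont : Continuous fun n : N =>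
      ((π n).toLinearIsometry.toContinuousLinearMap : X →L[ℂ] X))
    (π' : G →* (lp (fun _ : G ⧸ N => X) 2 ≃ₗᵢ[ℂ] lp (fun _ : G ⧸ N => X) 2))
    (hπ' : ∀ (g : G) (ξ : lp (fun _ : G ⧸ N => X) 2) (t : G ⧸ N) (n : N),
      (n : G) = σ t * g * (σ (t * QuotientGroup.mk' N g))⁻¹ →
        (π' g ξ : ∀ _ : G ⧸ N, X) t = π n (ξ (t * QuotientGroup.mk' N g))) :
    Continuous fun g : G =>
      ((π' g).toLinearIsometry.toContinuousLinearMap :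
        lp (fun _ : G ⧸ N => X) 2 →L[ℂ] lp (fun _ : G ⧸ N => X) 2) := by
  refine continuous_of_continuousAt_one ((toContinuousLinearMapHom ℂ _).comp π') ?_
  rw [ContinuousAt, map_one, nhds_basis_closedBall.tendsto_right_iff]
  intro ε hε
  have hπ_near : {n : N | toContinuousLinearMapHom ℂ X (π n) ∈ closedBall 1 ε} ∈ 𝓝 1 := by
    have hπ_one := hπcont.tendsto 1
    rw [map_one] at hπ_one
    exact hπ_one (closedBall_mem_nhds 1 hε)
  filter_upwards [hSIN.eventually_forall_conj_mem
    (hNopen.isOpenMap_subtype_val.image_mem_nhds hπ_near)] with g hg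
  have hgN : g ∈ N := by
    obtain ⟨n, -, hn⟩ := hg 1
    rw [one_mul, inv_one, mul_one] at hn
    exact hn ▸ n.2
  rw [mem_closedBall, dist_eq_norm]
  refine norm_induced_sub_one_le (by norm_num) (hπ' g) hgN hε.le fun t => ?_
  obtain ⟨n, hn, hng⟩ := hg (σ t)
  exact ⟨n, hng, by simpa [dist_eq_norm] using hn⟩

/-- If `G` is a SIN-group, `N` an open normal subgroup, `σ` a section of the quotient map
`φ : G → G ⧸ N` with `σ 1 = 1`, and `π` a norm-continuous unitary representation of `N` on a
complex Hilbert space `X`, then the induced representation `π'` of `G` on `ℓ²(G ⧸ N, X)`,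
determined by `(π' g ξ) t = π (σ t * g * (σ (t * φ g))⁻¹) (ξ (t * φ g))`, is also
norm-continuous. -/
theorem induced_representation_norm_continuous
    (G : Type*) [Group G] [TopologicalSpace G] [IsTopologicalGroup G]
    (hSIN : IsSINGroup G)
    (N : Subgroup G) [N.Normal] (hNopen : IsOpen (N : Set G))
    (σ : G ⧸ N → G)
    (hσ : ∀ t : G ⧸ N, QuotientGroup.mk' N (σ t) = t)
    (hσ1 : σ 1 = 1)
    (X : Type*) [NormedAddCommGroup X] [InnerProductSpace ℂ X] [CompleteSpace X]
    (π : N →* (X ≃ₗᵢ[ℂ] X))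
    (hπcont : Continuous fun n : N =>
      ((π n).toLinearIsometry.toContinuousLinearMap : X →L[ℂ] X))
    (π' : G →* (lp (fun _ : G ⧸ N => X) 2 ≃ₗᵢ[ℂ] lp (fun _ : G ⧸ N => X) 2))
    (hπ' : ∀ (g : G) (ξ : lp (fun _ : G ⧸ N => X) 2) (t : G ⧸ N) (n : N),
      (n : G) = σ t * g * (σ (t * QuotientGroup.mk' N g))⁻¹ →
        (π' g ξ : ∀ _ : G ⧸ N, X) t = π n (ξ (t * QuotientGroup.mk' N g))) :
    Continuous fun g : G =>
      ((π' g).toLinearIsometry.toContinuousLinearMap :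
        lp (fun _ : G ⧸ N => X) 2 →L[ℂ] lp (fun _ : G ⧸ N => X) 2) :=
  induced_representation_norm_continuous_general G hSIN N hNopen σ X π hπcont π' hπ'
end

section
/- Let G be a group, N a normal subgroup of G, F = G/N, φ : G → F the quotient homomorphism, σ : F → G a section of φ with σ(1_F) = 1_G, X a complex Hilbert space, π a group homomorphism from N into the group of unitary operators on X, and let π' be the induced representation of G on ℓ²(F, X), determined by (π'(g)ξ)(t) = π(σ(t)·g·σ(t·φ(g))⁻¹)(ξ(t·φ(g))). Then for every finite family g₁, …, g_m of elements of N and every family of complex scalars λ₁, …, λ_m, the operator norms satisfy ‖Σᵢ λᵢ·π(gᵢ)‖ ≤ ‖Σᵢ λᵢ·π'(gᵢ)‖, where the left-hand sum is a bounded operator on X and the right-hand sum is a bounded operator on ℓ²(F, X). -/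
/-!
Restricted to `N`, the induced representation acts on the coordinate at `1 ∈ G ⧸ N` exactly as
`π` does, because `σ 1 = 1`. So any linear combination of the `π gᵢ` is a compression of the same
combination of the `π' gᵢ` to that coordinate: embed `x` as `lp.single 2 1 x`, apply the big
operator and read off coordinate `1`. Compressions do not increase the operator norm.
-/

open scoped ENNReal

theorem ContinuousLinearMap.opNorm_le_of_apply_single {𝕜 α : Type*} {E F : α → Type*}
    [NontriviallyNormedField 𝕜] [∀ i, NormedAddCommGroup (E i)] [∀ i, NormedSpace 𝕜 (E i)]
    [∀ i, NormedAddCommGroup (F i)] [∀ i, NormedSpace 𝕜 (F i)] [DecidableEq α]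
    {p : ℝ≥0∞} [Fact (1 ≤ p)] {i j : α} {S : E i →L[𝕜] F j} {T : lp E p →L[𝕜] lp F p}
    (h : ∀ x, T (lp.single p i x) j = S x) : ‖S‖ ≤ ‖T‖ := by
  have hp : 0 < p := zero_lt_one.trans_le Fact.out
  refine S.opNorm_le_bound (norm_nonneg T) fun x => ?_
  calc ‖S x‖ = ‖T (lp.single p i x) j‖ := by rw [h]
    _ ≤ ‖T (lp.single p i x)‖ := lp.norm_apply_le_norm hp.ne' _ j
    _ ≤ ‖T‖ * ‖x‖ := by simpa [lp.norm_single hp] using T.le_opNorm (lp.single p i x)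

theorem induced_apply_one_of_mem {G : Type*} [Group G] {N : Subgroup G} [N.Normal]
    {σ : G ⧸ N → G} {X : Type*} [NormedAddCommGroup X] [InnerProductSpace ℂ X]
    {π : N →* (X ≃ₗᵢ[ℂ] X)}
    {π' : G →* (lp (fun _ : G ⧸ N => X) 2 ≃ₗᵢ[ℂ] lp (fun _ : G ⧸ N => X) 2)}
    (hσ1 : σ 1 = 1)
    (hπ' : ∀ (g : G) (ξ : lp (fun _ : G ⧸ N => X) 2) (t : G ⧸ N) (n : N),
      (n : G) = σ t * g * (σ (t * QuotientGroup.mk' N g))⁻¹ →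
        (π' g ξ : ∀ _ : G ⧸ N, X) t = π n (ξ (t * QuotientGroup.mk' N g)))
    (n : N) (ξ : lp (fun _ : G ⧸ N => X) 2) : π' n ξ 1 = π n (ξ 1) := by
  have hn : QuotientGroup.mk' N n = 1 := (QuotientGroup.eq_one_iff _).mpr n.2
  rw [hπ' n ξ 1 n (by rw [hn, mul_one, hσ1, one_mul, inv_one, mul_one]), hn, mul_one]

theorem norm_sum_le_norm_sum_induced_general
    (G : Type*) [Group G] (N : Subgroup G) [N.Normal]
    (σ : G ⧸ N → G)
    (hσ1 : σ 1 = 1)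
    (X : Type*) [NormedAddCommGroup X] [InnerProductSpace ℂ X]
    (π : N →* (X ≃ₗᵢ[ℂ] X))
    (π' : G →* (lp (fun _ : G ⧸ N => X) 2 ≃ₗᵢ[ℂ] lp (fun _ : G ⧸ N => X) 2))
    (hπ' : ∀ (g : G) (ξ : lp (fun _ : G ⧸ N => X) 2) (t : G ⧸ N) (n : N),
      (n : G) = σ t * g * (σ (t * QuotientGroup.mk' N g))⁻¹ →
        (π' g ξ : ∀ _ : G ⧸ N, X) t = π n (ξ (t * QuotientGroup.mk' N g)))
    (m : ℕ) (g : Fin m → N) (lam : Fin m → ℂ) :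
    ‖∑ i : Fin m, lam i • ((π (g i)).toLinearIsometry.toContinuousLinearMap : X →L[ℂ] X)‖ ≤
      ‖∑ i : Fin m, lam i • ((π' (g i : G)).toLinearIsometry.toContinuousLinearMap :
        lp (fun _ : G ⧸ N => X) 2 →L[ℂ] lp (fun _ : G ⧸ N => X) 2)‖ := by
  classical
  refine ContinuousLinearMap.opNorm_le_of_apply_single (E := fun _ => X) (F := fun _ => X)
    (i := 1) (j := 1) fun x => ?_
  simp only [sum_apply, smul_apply, lp.coeFn_sum, lp.coeFn_smul, Finset.sum_apply, Pi.smul_apply]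
  simp [induced_apply_one_of_mem hσ1 hπ']

/-- Let `G` be a group, `N` a normal subgroup, `σ` a section of the quotient map
`φ : G → G ⧸ N` with `σ 1 = 1`, `π` a unitary representation of `N` on a complex Hilbert
space `X`, and `π'` the induced representation of `G` on `ℓ²(G ⧸ N, X)`, determined by
`(π' g ξ) t = π (σ t * g * (σ (t * φ g))⁻¹) (ξ (t * φ g))`.  Then for any finite family
`g₁, …, g_m` of elements of `N` and complex scalars `λ₁, …, λ_m` the operator norms satisfy
`‖Σᵢ λᵢ • π gᵢ‖ ≤ ‖Σᵢ λᵢ • π' gᵢ‖`. -/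
theorem norm_sum_le_norm_sum_induced
    (G : Type*) [Group G] (N : Subgroup G) [N.Normal]
    (σ : G ⧸ N → G)
    (hσ : ∀ t : G ⧸ N, QuotientGroup.mk' N (σ t) = t)
    (hσ1 : σ 1 = 1)
    (X : Type*) [NormedAddCommGroup X] [InnerProductSpace ℂ X] [CompleteSpace X]
    (π : N →* (X ≃ₗᵢ[ℂ] X))
    (π' : G →* (lp (fun _ : G ⧸ N => X) 2 ≃ₗᵢ[ℂ] lp (fun _ : G ⧸ N => X) 2))
    (hπ' : ∀ (g : G) (ξ : lp (fun _ : G ⧸ N => X) 2) (t : G ⧸ N) (n : N),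
      (n : G) = σ t * g * (σ (t * QuotientGroup.mk' N g))⁻¹ →
        (π' g ξ : ∀ _ : G ⧸ N, X) t = π n (ξ (t * QuotientGroup.mk' N g)))
    (m : ℕ) (g : Fin m → N) (lam : Fin m → ℂ) :
    ‖∑ i : Fin m, lam i • ((π (g i)).toLinearIsometry.toContinuousLinearMap : X →L[ℂ] X)‖ ≤
      ‖∑ i : Fin m, lam i • ((π' (g i : G)).toLinearIsometry.toContinuousLinearMap :
        lp (fun _ : G ⧸ N => X) 2 →L[ℂ] lp (fun _ : G ⧸ N => X) 2)‖ :=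
  norm_sum_le_norm_sum_induced_general G N σ hσ1 X π π' hπ' m g lam
end
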